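/- Let R be a commutative ring, 𝔗 a half centered torsion theory over R, M an R-module, and x₁,…,x_r a sequence of elements of R. If x_i ∉ ⋃_{𝔭 ∈ 𝔗-wAss_R(M/(x₁,…,x_{i−1})M)} 𝔭 for all i = 1,…,r, then x₁,…,x_r is a weak M-regular sequence with respect to 𝔗. -/
import Mathlib


open CategoryTheory

universe u

noncomputable section

/-- A torsion theory over `R`: a class of `R`-modules closed under isomorphism, submodules,
quotient modules, extensions, and directed colimits (formulated as closure under directed
unions of submodules). -/
structure IsTorsionTheory (R : Type u) [CommRing R] (T : Set (ModuleCat.{u} R)) : Prop where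
  mem_of_iso : ∀ {N N' : ModuleCat.{u} R}, (N ≅ N') → N ∈ T → N' ∈ T
  submodule_mem : ∀ {N : ModuleCat.{u} R}, N ∈ T → ∀ S : Submodule R N,
    ModuleCat.of R S ∈ T
  quotient_mem : ∀ {N : ModuleCat.{u} R}, N ∈ T → ∀ S : Submodule R N,
    ModuleCat.of R (N ⧸ S) ∈ T
  ext_mem : ∀ {N : ModuleCat.{u} R} (S : Submodule R N),
    ModuleCat.of R S ∈ T → ModuleCat.of R (N ⧸ S) ∈ T → N ∈ T
  directed_mem : ∀ {N : ModuleCat.{u} R} {ι : Type u} [Nonempty ι] (S : ι → Submodule R N),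
    Directed (· ≤ ·) S → (∀ i, ModuleCat.of R (S i) ∈ T) → iSup S = ⊤ → N ∈ T

variable {R : Type u} [CommRing R]

/-- `x₁, …, x_n` is a weak `M`-regular sequence with respect to `𝔗` if the module
`((x₁,…,x_{i-1})M :_M x_i) / (x₁,…,x_{i-1})M` belongs to `𝔗` for all `i = 1, …, n`. -/
def IsWeakRegularSeqWrt (T : Set (ModuleCat.{u} R)) {n : ℕ} (x : Fin n → R) (M : Type u)
    [AddCommGroup M] [Module R M] : Prop :=
  ∀ i : Fin n,
    ModuleCat.of R
      ↥(Submodule.map (Ideal.span (x '' {j | j < i}) • (⊤ : Submodule R M)).mkQ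
        (Submodule.comap (LinearMap.lsmul R M (x i))
          (Ideal.span (x '' {j | j < i}) • (⊤ : Submodule R M)))) ∈ T

/-- The weakly associated primes of `M`: the primes that are minimal over the annihilator
`(0 :_R m)` of some `m ∈ M`. -/
def weakAssocPrimes (R : Type u) [CommRing R] (M : Type u) [AddCommGroup M] [Module R M] :
    Set (Ideal R) :=
  { p | ∃ m : M, p ∈ (Ideal.torsionOf R M m).minimalPrimes }

/-- A torsion theory `𝔗` is half centered if every module `N` such that `R/𝔭 ∈ 𝔗` for all
primes `𝔭` in the support of `N` itself belongs to `𝔗`. -/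
def IsHalfCentered {R : Type u} [CommRing R] (T : Set (ModuleCat.{u} R)) : Prop :=
  ∀ N : ModuleCat.{u} R,
    (∀ p ∈ Module.support R N, ModuleCat.of R (R ⧸ p.asIdeal) ∈ T) → N ∈ T

/-- **Theorem.** Let `𝔗` be a half centered torsion theory, `M` an `R`-module and
`x₁, …, x_r` a sequence of elements of `R`. If
`x_i ∉ ⋃ {𝔭 ∈ 𝔗-wAss_R(M/(x₁,…,x_{i-1})M)}` for all `i = 1, …, r`, then `x₁, …, x_r` is a
weak `M`-regular sequence with respect to `𝔗`. -/
theorem isWeakRegularSeqWrt_of_not_mem_twAss (T : Set (ModuleCat.{u} R))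
    (hT : IsTorsionTheory R T) (hHC : IsHalfCentered T)
    (M : Type u) [AddCommGroup M] [Module R M] {r : ℕ} (x : Fin r → R)
    (hx : ∀ i : Fin r, ∀ p ∈ weakAssocPrimes R
        (M ⧸ (Ideal.span (x '' {j | j < i}) • (⊤ : Submodule R M))),
        ModuleCat.of R (R ⧸ p) ∉ T → x i ∉ p) :
    IsWeakRegularSeqWrt T x M := by
  intro i
  set S := Ideal.span (x '' {j | j < i}) • (⊤ : Submodule R M) with hS
  set K := Submodule.map S.mkQ (Submodule.comap (LinearMap.lsmul R M (x i)) S) with hK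
  apply hHC
  intro p hp
  obtain ⟨m, hm⟩ : ∃ m : ↥K, (Submodule.span R {m}).annihilator ≤ p.asIdeal :=
    Module.mem_support_iff_exists_annihilator.mp hp
  have hsmul : x i • (m : M ⧸ S) = 0 := by
    obtain ⟨n, hn, hn'⟩ := m.2
    rw [← hn', ← map_smul, Submodule.mkQ_apply, Submodule.Quotient.mk_eq_zero]
    exact hn
  have hann : Ideal.torsionOf R (M ⧸ S) (m : M ⧸ S) ≤ p.asIdeal := by
    intro t ht
    apply hm
    rw [Submodule.mem_annihilator_span_singleton]
    exact Subtype.ext ((Ideal.mem_torsionOf_iff (M := M ⧸ S) (m : M ⧸ S) t).mp ht)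
  obtain ⟨q, hq, hqp⟩ := Ideal.exists_minimalPrimes_le hann
  have hxq : x i ∈ q := hq.1.2 (by rwa [Ideal.mem_torsionOf_iff])
  have hRqT : ModuleCat.of R (R ⧸ q) ∈ T := by
    by_contra h
    exact hx i q ⟨(m : M ⧸ S), hq⟩ h hxq
  have e : ((R ⧸ q) ⧸ Submodule.map (Submodule.mkQ q) (p.asIdeal : Submodule R R)) ≃ₗ[R]
      (R ⧸ p.asIdeal) :=
    Submodule.quotientQuotientEquivQuotient q p.asIdeal hqp
  exact hT.mem_of_iso e.toModuleIso (hT.quotient_mem hRqT _)
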